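/- Let n ≥ 7 and let ℓ ∈ ℝⁿ be an ordered, generic, 5-regular length vector with ℓ_{n−1} < ℓ_n. Then the length vector ℓ^{n−1}_− = (ℓ_1,…,ℓ_{n−2}, ℓ_n − ℓ_{n−1}) ∈ ℝ^{n−1} is generic and 3-regular. -/

import Mathlib

/-!
Write `ℓ⁻` for `ℓ^{n-1}_-`. A subset `S` of the indices of `ℓ⁻` lifts to a subset of the indices
of `ℓ`: replace the last index by `n` if it lies in `S`, and adjoin `n - 1` otherwise. In both
cases the `ℓ`-sum of the lift exceeds the `ℓ⁻`-sum of `S` by `ℓ_{n-1}`, while the total sums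
differ by `2 ℓ_{n-1}`; so `S` is `ℓ⁻`-short (long) iff its lift is `ℓ`-short (long), and
genericity transfers.

For regularity, long sets of fewer than `d - 1` elements extend to long sets of exactly `d - 1`
elements avoiding any given index, so a `d`-regular index `i` of `ℓ` lies in every long set of at
most `d - 1` elements, in particular in the lift of every `ℓ⁻`-long `(d - 2)`-set. If `i` is
neither `n - 1` nor `n`, it is itself a `(d - 1)`-regular index of `ℓ⁻`. Otherwise the last index
is: if an `ℓ⁻`-long `S` avoided it, then both `S ∪ {n - 1}` and `S ∪ {n}` would be `ℓ`-long
(as `ℓ_{n-1} ≤ ℓ_n`), and `i` cannot lie in both.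
-/

noncomputable section

/-- `ℝ^d` with the Euclidean norm. -/
abbrev Euc (d : ℕ) := EuclideanSpace ℝ (Fin d)

/-- A subset `J` is `ℓ`-short if the sum of its entries is less than the sum over the complement. -/
def Short {n : ℕ} (ℓ : Fin n → ℝ) (J : Finset (Fin n)) : Prop :=
  ∑ j ∈ J, ℓ j < ∑ j ∈ Jᶜ, ℓ j

/-- A subset is `ℓ`-long if its complement is `ℓ`-short. -/
def Long {n : ℕ} (ℓ : Fin n → ℝ) (J : Finset (Fin n)) : Prop := Short ℓ Jᶜ

/-- `ℓ` is generic if every subset is `ℓ`-short or `ℓ`-long. -/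
def Generic {n : ℕ} (ℓ : Fin n → ℝ) : Prop := ∀ J : Finset (Fin n), Short ℓ J ∨ Long ℓ J

/-- `ℓ` is `d`-regular if the intersection of all `ℓ`-long subsets of cardinality `d-1`
is nonempty (with the convention that the empty intersection is everything). -/
def DRegular (d : ℕ) {n : ℕ} (ℓ : Fin n → ℝ) : Prop :=
  ∃ i : Fin n, ∀ J : Finset (Fin n), J.card = d - 1 → Long ℓ J → i ∈ J


section Lengths

variable {n : ℕ} {ℓ : Fin n → ℝ}

theorem short_iff (J : Finset (Fin n)) :
    Short ℓ J ↔ 2 * ∑ j ∈ J, ℓ j < ∑ j, ℓ j := by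
  rw [Short, ← Finset.sum_compl_add_sum J]
  constructor <;> intro <;> linarith

theorem long_iff (J : Finset (Fin n)) :
    Long ℓ J ↔ ∑ j, ℓ j < 2 * ∑ j ∈ J, ℓ j := by
  rw [Long, short_iff, ← Finset.sum_compl_add_sum J]
  constructor <;> intro <;> linarith

theorem Long.mono (hpos : ∀ i, 0 < ℓ i) {J K : Finset (Fin n)} (hJK : J ⊆ K)
    (hJ : Long ℓ J) : Long ℓ K := by
  rw [long_iff] at hJ ⊢
  have := Finset.sum_le_sum_of_subset_of_nonneg hJK fun i _ _ => (hpos i).le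
  linarith

theorem mem_of_long_of_card_le (hpos : ∀ i, 0 < ℓ i) {m : ℕ} {i : Fin n}
    (hi : ∀ J : Finset (Fin n), J.card = m → Long ℓ J → i ∈ J) (hm : m < n)
    {J : Finset (Fin n)} (hJm : J.card ≤ m) (hJ : Long ℓ J) : i ∈ J := by
  by_contra hiJ
  obtain ⟨K, hJK, hK, hKm⟩ := Finset.exists_subsuperset_card_eq
    (Finset.subset_erase.2 ⟨Finset.subset_univ J, hiJ⟩) hJm
    (by rw [Finset.card_erase_of_mem (Finset.mem_univ i), Finset.card_univ, Fintype.card_fin]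
        omega)
  exact Finset.notMem_erase i _ (hK (hi K hKm (hJ.mono hpos hJK)))

theorem DRegular.of_le (hpos : ∀ i, 0 < ℓ i) {d e : ℕ} (h : DRegular d ℓ) (hed : e ≤ d)
    (hd : d ≤ n) : DRegular e ℓ := by
  obtain ⟨i, hi⟩ := h
  exact ⟨i, fun J hJ hJl =>
    mem_of_long_of_card_le hpos hi (by have := i.pos; omega) (by omega) hJl⟩

end Lengths

section DiffLast

variable {k : ℕ} (ℓ : Fin (k + 2) → ℝ)

/-- The paper's `ℓ^{n-1}_-` for `n = k + 2`: `Fin.last (k + 1)` and `(Fin.last k).castSucc` are the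
indices `n` and `n - 1`. -/
def diffLast : Fin (k + 1) → ℝ :=
  Fin.snoc (fun j => ℓ j.castSucc.castSucc) (ℓ (Fin.last (k + 1)) - ℓ (Fin.last k).castSucc)

def liftSubset (S : Finset (Fin (k + 1))) : Finset (Fin (k + 2)) :=
  if Fin.last k ∈ S then S.map (Fin.succAboveEmb (Fin.last k).castSucc)
  else insert (Fin.last k).castSucc (S.map (Fin.succAboveEmb (Fin.last k).castSucc))

theorem sum_diffLast : ∑ j, diffLast ℓ j = ∑ j, ℓ j - 2 * ℓ (Fin.last k).castSucc := by
  simp only [diffLast, Fin.sum_univ_castSucc (f := ℓ), Fin.sum_univ_castSucc (n := k),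
    Fin.snoc_castSucc, Fin.snoc_last]
  ring

theorem apply_succAbove_eq_diffLast_add (j : Fin (k + 1)) :
    ℓ ((Fin.last k).castSucc.succAbove j) =
      diffLast ℓ j + if j = Fin.last k then ℓ (Fin.last k).castSucc else 0 := by
  induction j using Fin.lastCases with
  | last => simp [diffLast]
  | cast j => simp [diffLast, Fin.succAbove_castSucc_of_lt _ _ (Fin.castSucc_lt_last j)]

theorem sum_liftSubset (S : Finset (Fin (k + 1))) :
    ∑ j ∈ liftSubset S, ℓ j = ∑ j ∈ S, diffLast ℓ j + ℓ (Fin.last k).castSucc := by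
  have hmap : ∑ j ∈ S.map (Fin.succAboveEmb (Fin.last k).castSucc), ℓ j =
      ∑ j ∈ S, diffLast ℓ j + if Fin.last k ∈ S then ℓ (Fin.last k).castSucc else 0 := by
    simp [apply_succAbove_eq_diffLast_add, Finset.sum_add_distrib]
  by_cases h : Fin.last k ∈ S
  · simp [liftSubset, h, hmap]
  · rw [liftSubset, if_neg h, Finset.sum_insert (by simp [Fin.succAbove_ne]), hmap, if_neg h]
    ring

theorem short_diffLast_iff (S : Finset (Fin (k + 1))) :
    Short (diffLast ℓ) S ↔ Short ℓ (liftSubset S) := by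
  rw [short_iff, short_iff, sum_liftSubset, sum_diffLast]
  constructor <;> intro <;> linarith

theorem long_diffLast_iff (S : Finset (Fin (k + 1))) :
    Long (diffLast ℓ) S ↔ Long ℓ (liftSubset S) := by
  rw [long_iff, long_iff, sum_liftSubset, sum_diffLast]
  constructor <;> intro <;> linarith

theorem card_liftSubset (S : Finset (Fin (k + 1))) :
    (liftSubset S).card = (S.erase (Fin.last k)).card + 1 := by
  by_cases h : Fin.last k ∈ S
  · rw [liftSubset, if_pos h, Finset.card_map, Finset.card_erase_add_one h]
  · simp [liftSubset, h, Fin.succAbove_ne]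

theorem castSucc_last_mem_liftSubset_iff (S : Finset (Fin (k + 1))) :
    (Fin.last k).castSucc ∈ liftSubset S ↔ Fin.last k ∉ S := by
  by_cases h : Fin.last k ∈ S <;> simp [liftSubset, h, Fin.succAbove_ne]

theorem succAbove_mem_liftSubset_iff (S : Finset (Fin (k + 1))) (j : Fin (k + 1)) :
    (Fin.last k).castSucc.succAbove j ∈ liftSubset S ↔ j ∈ S := by
  by_cases h : Fin.last k ∈ S <;> simp [liftSubset, h, Fin.succAbove_ne]

variable {ℓ}

theorem generic_diffLast (h : Generic ℓ) : Generic (diffLast ℓ) := fun S =>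
  (h (liftSubset S)).imp (short_diffLast_iff ℓ S).2 (long_diffLast_iff ℓ S).2

theorem dRegular_diffLast (hpos : ∀ i, 0 < ℓ i)
    (hab : ℓ (Fin.last k).castSucc ≤ ℓ (Fin.last (k + 1))) {d : ℕ} (hd : d ≤ k)
    (h : DRegular (d + 2) ℓ) : DRegular (d + 1) (diffLast ℓ) := by
  obtain ⟨i, hi⟩ := h
  have hmem : ∀ S : Finset (Fin (k + 1)), (S.erase (Fin.last k)).card ≤ d →
      Long (diffLast ℓ) S → i ∈ liftSubset S := fun S hS hSl =>
    mem_of_long_of_card_le hpos hi (by omega) (by rw [card_liftSubset]; omega)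
      ((long_diffLast_iff ℓ S).1 hSl)
  by_cases hi' : ∃ j, j ≠ Fin.last k ∧ (Fin.last k).castSucc.succAbove j = i
  · obtain ⟨j, -, rfl⟩ := hi'
    refine ⟨j, fun S hS hSl => ?_⟩
    rw [← succAbove_mem_liftSubset_iff]
    exact hmem S ((Finset.card_erase_le).trans hS.le) hSl
  · refine ⟨Fin.last k, fun S hS hSl => ?_⟩
    by_contra hlast
    have hlong : Long (diffLast ℓ) (insert (Fin.last k) S) := by
      rw [long_iff] at hSl ⊢
      rw [Finset.sum_insert hlast]
      simp only [diffLast, Fin.snoc_last] at hSl ⊢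
      linarith
    have hiS := hmem S ((Finset.card_erase_le).trans hS.le) hSl
    have hiS' := hmem _ (by rw [Finset.erase_insert hlast]; omega) hlong
    obtain rfl | ⟨j, rfl⟩ :
        i = (Fin.last k).castSucc ∨ ∃ j, (Fin.last k).castSucc.succAbove j = i :=
      (eq_or_ne _ _).imp_right Fin.exists_succAbove_eq
    · rw [castSucc_last_mem_liftSubset_iff] at hiS'
      exact hiS' (Finset.mem_insert_self _ _)
    · rw [succAbove_mem_liftSubset_iff] at hiS
      obtain rfl : j = Fin.last k := by
        by_contra hj
        exact hi' ⟨j, hj, rfl⟩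
      exact hlast hiS

end DiffLast

/-- Let `n ≥ 7` and let `ℓ ∈ ℝⁿ` be an ordered, generic, `5`-regular
length vector with `ℓ_{n-1} < ℓ_n`. Then the length vector
`ℓ^{n-1}_- = (ℓ_1, …, ℓ_{n-2}, ℓ_n - ℓ_{n-1}) ∈ ℝ^{n-1}` is generic and `3`-regular. -/
theorem stmt17 (n : ℕ) (hn : 7 ≤ n) (ℓ : Fin n → ℝ)
    (hpos : ∀ i, 0 < ℓ i) (hgen : Generic ℓ) (hreg : DRegular 5 ℓ)
    (hlt : ℓ ⟨n - 2, by omega⟩ < ℓ ⟨n - 1, by omega⟩) :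
    Generic (fun i : Fin (n - 1) =>
      if (i : ℕ) = n - 2 then ℓ ⟨n - 1, by omega⟩ - ℓ ⟨n - 2, by omega⟩
      else ℓ (Fin.castLE (Nat.sub_le n 1) i)) ∧
    DRegular 3 (fun i : Fin (n - 1) =>
      if (i : ℕ) = n - 2 then ℓ ⟨n - 1, by omega⟩ - ℓ ⟨n - 2, by omega⟩
      else ℓ (Fin.castLE (Nat.sub_le n 1) i)) := by
  obtain ⟨k, rfl⟩ : ∃ k, n = k + 2 := ⟨n - 2, by omega⟩
  have hdiff : (fun i : Fin (k + 2 - 1) =>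
      if (i : ℕ) = k + 2 - 2 then ℓ ⟨k + 2 - 1, by omega⟩ - ℓ ⟨k + 2 - 2, by omega⟩
      else ℓ (Fin.castLE (Nat.sub_le (k + 2) 1) i)) = diffLast ℓ := by
    funext i
    induction i using Fin.lastCases with
    | last =>
      simp only [Nat.add_one_sub_one, Fin.val_last, add_tsub_cancel_right, ↓reduceIte, diffLast,
        Fin.snoc_last]
      rfl
    | cast j =>
      simp only [Nat.add_one_sub_one, Fin.val_castSucc, add_tsub_cancel_right, j.is_lt.ne,
        ↓reduceIte, Fin.castLE_castSucc, diffLast, Fin.snoc_castSucc]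
      rfl
  rw [hdiff]
  exact ⟨generic_diffLast hgen,
    dRegular_diffLast hpos hlt.le (by omega) (hreg.of_le hpos (by omega) (by omega))⟩
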